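/- arXiv:0907.0305 — 6 statements merged into one kernel-verified Lean document; each statement's English description precedes it below -/
import Mathlib

section
/- Let δ be uniformly distributed on [0,1) and fix γ > 1. For a weight w = γ^{p+α} with p an integer and 0 ≤ α < 1, define the rounded weight w'_δ = γ^{p+δ} if δ ≤ α and w'_δ = γ^{p−1+δ} if δ > α. Then the expectation of w'_δ equals w · (1 − 1/γ)/ln γ. -/
open Real intervalIntegral in
lemma aux_int (γ : ℝ) (hγ : 1 < γ) (c a b : ℝ) :
    (∫ δ in a..b, γ ^ (c + δ)) = (γ ^ (c + b) - γ ^ (c + a)) / Real.log γ := by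
  have hγ0 : 0 < γ := by linarith
  have hlog : Real.log γ ≠ 0 := ne_of_gt (Real.log_pos hγ)
  have key : ∀ x : ℝ, HasDerivAt (fun t => γ ^ (c + t) / Real.log γ) (γ ^ (c + x)) x := by
    intro x
    have h1 : HasDerivAt (fun t : ℝ => c + t) 1 x := (hasDerivAt_id x).const_add c
    have h2 := (Real.hasStrictDerivAt_const_rpow hγ0 (c + x)).hasDerivAt.comp x h1
    simpa [mul_div_assoc, div_self hlog] using h2.div_const (Real.log γ)
  have hcont : Continuous fun t : ℝ => γ ^ (c + t) := by
    have : ∀ t : ℝ, γ ^ (c + t) = Real.exp ((c + t) * Real.log γ) := fun t =>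
      by rw [Real.rpow_def_of_pos hγ0, mul_comm]
    simp_rw [this]
    exact Real.continuous_exp.comp (((continuous_const.add continuous_id).mul continuous_const))
  have := intervalIntegral.integral_eq_sub_of_hasDerivAt (f := fun t => γ ^ (c + t) / Real.log γ)
    (f' := fun t => γ ^ (c + t)) (a := a) (b := b)
    (fun x _ => key x) (hcont.intervalIntegrable a b)
  rw [this]; ring

open Real intervalIntegral in
/-- Expected rounded weight under a uniform shift `δ ∈ [0,1)` equals
`w (1 - 1/γ) / ln γ` for `w = γ^{p+α}`. -/
theorem stmt_2 (γ : ℝ) (hγ : 1 < γ) (p : ℤ) (α : ℝ) (hα0 : 0 ≤ α) (hα1 : α < 1) :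
    (∫ δ in (0:ℝ)..α, γ ^ ((p : ℝ) + δ)) + (∫ δ in α..(1:ℝ), γ ^ ((p : ℝ) - 1 + δ))
      = γ ^ ((p : ℝ) + α) * (1 - 1 / γ) / Real.log γ := by
  have hγ0 : 0 < γ := by linarith
  have h2 : ∀ δ:ℝ, (p:ℝ) - 1 + δ = ((p:ℝ)-1) + δ := fun _ => by ring
  conv_lhs => rw [show (fun δ:ℝ => γ ^ ((p:ℝ) - 1 + δ)) = (fun δ:ℝ => γ ^ (((p:ℝ)-1) + δ)) from funext fun δ => by rw [h2]]
  rw [aux_int γ hγ, aux_int γ hγ]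
  have e1 : γ ^ ((p:ℝ) + (0:ℝ)) = γ ^ (p:ℝ) := by norm_num
  have e2 : γ ^ ((p:ℝ) - 1 + (1:ℝ)) = γ ^ (p:ℝ) := by norm_num
  have e3 : γ ^ ((p:ℝ) - 1 + α) = γ ^ ((p:ℝ) + α) / γ := by
    rw [eq_div_iff (ne_of_gt hγ0), ← Real.rpow_add_one (ne_of_gt hγ0)]
    ring_nf
  rw [e1, e2, e3]; ring
end

section
/- For γ > 1 and any real δ ∈ [0,1), if δ' is obtained by rounding δ down to the largest multiple of 1/q not exceeding δ (q a positive integer), then for any weight w > 0 the ratio of the rounded weight of w under δ over the rounded weight under δ' is at most γ^{1/q}. -/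
/-
Both rounded weights are at most `w`, and `w` lies below the next grid point `γ^{j+1+δ'}`; since
`δ' ≤ δ` this forces `i ≤ j`, so the two grid points differ by at most the factor `γ^{δ-δ'}`, and
`δ - δ' < 1/q` by the choice of `δ'`.
-/

lemma floor_mul_div_le (x : ℝ) {q : ℝ} (hq : 0 < q) : ⌊q * x⌋ / q ≤ x := by
  rw [div_le_iff₀ hq, mul_comm x]
  exact Int.floor_le _

lemma sub_floor_mul_div_lt (x : ℝ) {q : ℝ} (hq : 0 < q) : x - ⌊q * x⌋ / q < 1 / q := by
  rw [sub_lt_iff_lt_add, ← add_div, lt_div_iff₀ hq, mul_comm x, add_comm]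
  exact Int.lt_floor_add_one _

lemma int_le_of_rpow_le_of_lt_rpow {γ s s' w : ℝ} (hγ : 1 < γ) (hs : s' ≤ s) {i j : ℤ}
    (hi : γ ^ ((i : ℝ) + s) ≤ w) (hj : w < γ ^ ((j : ℝ) + 1 + s')) : i ≤ j := by
  have hexp : (i : ℝ) + s < (j : ℝ) + 1 + s' :=
    (Real.rpow_lt_rpow_left_iff hγ).mp (hi.trans_lt hj)
  have : (i : ℝ) < (j : ℝ) + 1 := by linarith
  exact Int.lt_add_one_iff.mp (by exact_mod_cast this)

lemma rpow_div_rpow_le_rpow_sub_of_shift_le {γ s s' w : ℝ} (hγ : 1 < γ) (hs : s' ≤ s) {i j : ℤ}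
    (hi : γ ^ ((i : ℝ) + s) ≤ w) (hj : w < γ ^ ((j : ℝ) + 1 + s')) :
    γ ^ ((i : ℝ) + s) / γ ^ ((j : ℝ) + s') ≤ γ ^ (s - s') := by
  have hij : (i : ℝ) ≤ j := by exact_mod_cast int_le_of_rpow_le_of_lt_rpow hγ hs hi hj
  rw [← Real.rpow_sub (zero_lt_one.trans hγ)]
  exact Real.rpow_le_rpow_of_exponent_le hγ.le (by linarith)

theorem stmt_5_general (γ : ℝ) (hγ : 1 < γ) (q : ℕ) (hq : 1 ≤ q) (δ : ℝ)
    (δ' : ℝ) (hδ' : δ' = ⌊(q : ℝ) * δ⌋ / q)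
    (w : ℝ) (i j : ℤ)
    (hi : γ ^ ((i : ℝ) + δ) ≤ w ∧ w < γ ^ ((i : ℝ) + 1 + δ))
    (hj : γ ^ ((j : ℝ) + δ') ≤ w ∧ w < γ ^ ((j : ℝ) + 1 + δ')) :
    γ ^ ((i : ℝ) + δ) / γ ^ ((j : ℝ) + δ') ≤ γ ^ ((1 : ℝ) / q) := by
  have hq0 : (0 : ℝ) < q := by exact_mod_cast hq
  have hδ'_le : δ' ≤ δ := hδ' ▸ floor_mul_div_le δ hq0
  have hgap : δ - δ' < 1 / q := hδ' ▸ sub_floor_mul_div_lt δ hq0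
  calc γ ^ ((i : ℝ) + δ) / γ ^ ((j : ℝ) + δ')
      ≤ γ ^ (δ - δ') := rpow_div_rpow_le_rpow_sub_of_shift_le hγ hδ'_le hi.1 hj.2
    _ ≤ γ ^ ((1 : ℝ) / q) := Real.rpow_le_rpow_of_exponent_le hγ.le hgap.le

/-- Rounding the shift `δ` down to a multiple `δ' = ⌊qδ⌋/q` of `1/q` changes the
rounded weight of any `w > 0` by a multiplicative factor of at most `γ^{1/q}`. -/
theorem stmt_5 (γ : ℝ) (hγ : 1 < γ) (q : ℕ) (hq : 1 ≤ q) (δ : ℝ) (hδ0 : 0 ≤ δ) (hδ1 : δ < 1)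
    (δ' : ℝ) (hδ' : δ' = ⌊(q : ℝ) * δ⌋ / q)
    (w : ℝ) (hw : 0 < w) (i j : ℤ)
    (hi : γ ^ ((i : ℝ) + δ) ≤ w ∧ w < γ ^ ((i : ℝ) + 1 + δ))
    (hj : γ ^ ((j : ℝ) + δ') ≤ w ∧ w < γ ^ ((j : ℝ) + 1 + δ')) :
    γ ^ ((i : ℝ) + δ) / γ ^ ((j : ℝ) + δ') ≤ γ ^ ((1 : ℝ) / q) :=
  stmt_5_general γ hγ q hq δ δ' hδ' w i j hi hj
end

section
/- With the sequences w, w', S defined by w₁ = 1, w_{k+1} = ((C²+1)w_k − C·S_{k−1})/(2C+1), w'_{k+1} = ((C+1)w_{k+1} − w_k)/C, and S_i = ∑_{j=1}^i w_j, for all i ≥ 2 it holds that S_{i−2} + w_i + w_{i+1} + w'_{i+1} = C·w'_i. -/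
/-- For the recursively defined sequences `w, w'` with partial sums `S`,
`S_{i-2} + w_i + w_{i+1} + w'_{i+1} = C w'_i` for all `i ≥ 2`. -/
theorem stmt_7 (C : ℝ) (hC : 0 < C) (w w' S : ℕ → ℝ)
    (hS : ∀ i, S i = ∑ j ∈ Finset.range i, w (j + 1))
    (hw1 : w 1 = 1)
    (hw : ∀ k ≥ 1, w (k + 1) = ((C ^ 2 + 1) * w k - C * S (k - 1)) / (2 * C + 1))
    (hw' : ∀ k ≥ 1, w' (k + 1) = ((C + 1) * w (k + 1) - w k) / C) :
    ∀ i ≥ 2, S (i - 2) + w i + w (i + 1) + w' (i + 1) = C * w' i := by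
  intro i hi
  obtain ⟨m, rfl⟩ : ∃ m, i = m + 2 := ⟨i - 2, by omega⟩
  have h1 := hw (m + 2) (by omega)
  have h2 := hw' (m + 2) (by omega)
  have h3 := hw' (m + 1) (by omega)
  have hsum : S (m + 1) = S m + w (m + 1) := by
    rw [hS (m + 1), hS m, Finset.sum_range_succ]
  have e1 : m + 2 - 2 = m := rfl
  have e2 : m + 2 - 1 = m + 1 := rfl
  rw [e1] ; rw [e2] at h1
  have hC1 : (2 * C + 1) ≠ 0 := by positivity
  have hC0 : C ≠ 0 := ne_of_gt hC
  rw [h2, h3, h1, hsum]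
  field_simp
  ring
end

section
/- Suppose C > 0 and S : ℕ → ℝ satisfies S₀ = 0, S₁ = 1, and S_{k+1} = ((C²+2C+2)S_k − (C²+C+1)S_{k−1})/(2C+1). If for some n ≥ 3 we have S_{n−1} − S_{n−2} < S_{n−2} − S_{n−3}, then C·(S_{n−1} − S_{n−2}) < S_{n−1}. -/
/-- If the increments of `S` strictly decrease at step `n`, then
`C (S_{n-1} - S_{n-2}) < S_{n-1}`. -/
theorem stmt_9 (C : ℝ) (hC : 0 < C) (S : ℕ → ℝ)
    (hS0 : S 0 = 0) (hS1 : S 1 = 1)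
    (hrec : ∀ k ≥ 1, S (k + 1)
      = ((C ^ 2 + 2 * C + 2) * S k - (C ^ 2 + C + 1) * S (k - 1)) / (2 * C + 1))
    (n : ℕ) (hn : 3 ≤ n)
    (hdec : S (n - 1) - S (n - 2) < S (n - 2) - S (n - 3)) :
    C * (S (n - 1) - S (n - 2)) < S (n - 1) := by
  obtain ⟨m, rfl⟩ : ∃ m, n = m + 3 := ⟨n - 3, by omega⟩
  have e1 : m + 3 - 1 = m + 2 := by omega
  have e2 : m + 3 - 2 = m + 1 := by omega
  have e3 : m + 3 - 3 = m := by omega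
  rw [e1, e2, e3] at hdec; rw [e1, e2]
  have h := hrec (m + 1) (by omega)
  simp only [Nat.add_sub_cancel] at h
  have hpos : (0:ℝ) < 2 * C + 1 := by linarith
  rw [eq_div_iff (ne_of_gt hpos)] at h
  nlinarith [mul_pos hC hC, mul_lt_mul_of_pos_left hdec
    (show (0:ℝ) < C ^ 2 + C + 1 by positivity)]
end

section
/- Let C > 0 with C³ < 4(C²+C+1). Then the sequence S₀ = 0, S₁ = 1, S_{k+1} = ((C²+2C+2)S_k − (C²+C+1)S_{k−1})/(2C+1) attains a negative value: there exists k ≥ 1 with S_k < 0. -/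
/-!
Writing `a = C² + 2C + 2`, `b = C² + C + 1`, `d = 2C + 1`, the recurrence reads
`d S_{k+2} = a S_{k+1} - b S_k`, and `a² - 4bd = C (C³ - 4(C² + C + 1)) < 0`: the characteristic
roots are not real. If `S` stayed nonnegative from `k = 1` on, it would stay positive, and the
ratios `t_k` of consecutive terms would satisfy `d t_{k+1} t_k = a t_k - b`. Since `d t² - a t + b`
is bounded below by `(4bd - a²) / 4d > 0`, each step decreases `t_k` by at least a fixed amount
(while `t_k ≤ t_0`), so `t_k` eventually becomes negative.
-/

section LinearRecurrence

variable {a b d : ℝ}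

lemma pos_of_nonneg_of_linearRecurrence {x : ℕ → ℝ} (hd : 0 ≤ d) (hb : 0 < b)
    (hrec : ∀ k, d * x (k + 2) = a * x (k + 1) - b * x k) (hx0 : 0 < x 0)
    (hnonneg : ∀ k, 0 ≤ x k) : ∀ k, 0 < x k := by
  intro k
  induction k with
  | zero => exact hx0
  | succ n ih =>
    refine (hnonneg (n + 1)).lt_of_ne fun hzero => ?_
    have := hrec n
    rw [← hzero] at this
    nlinarith [mul_nonneg hd (hnonneg (n + 2))]

lemma riccati_step_le {t t' T : ℝ} (hd : 0 < d) (hdisc : a ^ 2 ≤ 4 * b * d) (ht : 0 < t)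
    (htT : t ≤ T) (hstep : d * t' * t = a * t - b) :
    t' ≤ t - (4 * b * d - a ^ 2) / (4 * d ^ 2 * T) := by
  have hdt : 0 < d * t := mul_pos hd ht
  have ht' : t' = t - (d * t ^ 2 - a * t + b) / (d * t) := by
    field_simp
    linear_combination hstep
  have hT : (4 * b * d - a ^ 2) / (4 * d ^ 2 * T) ≤ (4 * b * d - a ^ 2) / (4 * d ^ 2 * t) :=
    div_le_div_of_nonneg_left (by linarith) (by positivity) (by gcongr)
  -- `4 d (d t² - a t + b) = (2 d t - a)² + (4 b d - a²)`
  have hquad : (4 * b * d - a ^ 2) / (4 * d ^ 2 * t) ≤ (d * t ^ 2 - a * t + b) / (d * t) := by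
    rw [div_le_div_iff₀ (by positivity) hdt]
    nlinarith [mul_nonneg hdt.le (sq_nonneg (2 * d * t - a))]
  linarith

lemma not_forall_pos_of_riccati {t : ℕ → ℝ} (hd : 0 < d) (hdisc : a ^ 2 < 4 * b * d)
    (hstep : ∀ n, d * t (n + 1) * t n = a * t n - b) : ¬ ∀ n, 0 < t n := by
  intro hpos
  set δ := (4 * b * d - a ^ 2) / (4 * d ^ 2 * t 0)
  have hδ : 0 < δ := div_pos (by linarith) (by have := hpos 0; positivity)
  have hdecay : ∀ n : ℕ, t n ≤ t 0 - n * δ := by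
    intro n
    induction n with
    | zero => simp
    | succ n ih =>
      have := riccati_step_le hd hdisc.le (hpos n) (by nlinarith [n.cast_nonneg (α := ℝ)]) (hstep n)
      push_cast
      linarith
  obtain ⟨N, hN⟩ := exists_nat_gt (t 0 / δ)
  rw [div_lt_iff₀ hδ] at hN
  linarith [hdecay N, hpos N]

theorem exists_neg_of_linearRecurrence {x : ℕ → ℝ} (hd : 0 < d) (hdisc : a ^ 2 < 4 * b * d)
    (hrec : ∀ k, d * x (k + 2) = a * x (k + 1) - b * x k) (hx0 : 0 < x 0) : ∃ k, x k < 0 := by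
  by_contra! hnonneg
  have hb : 0 < b := by nlinarith [sq_nonneg a]
  have hpos := pos_of_nonneg_of_linearRecurrence hd.le hb hrec hx0 hnonneg
  refine not_forall_pos_of_riccati (t := fun n => x (n + 1) / x n) hd hdisc (fun n => ?_)
    fun n => div_pos (hpos (n + 1)) (hpos n)
  have := hpos n
  have := hpos (n + 1)
  field_simp
  linear_combination hrec n

end LinearRecurrence

theorem stmt_14_general (C : ℝ) (hC : 0 < C) (h : C ^ 3 < 4 * (C ^ 2 + C + 1))
    (S : ℕ → ℝ) (hS1 : S 1 = 1)
    (hrec : ∀ k ≥ 1, S (k + 1)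
      = ((C ^ 2 + 2 * C + 2) * S k - (C ^ 2 + C + 1) * S (k - 1)) / (2 * C + 1)) :
    ∃ k : ℕ, 1 ≤ k ∧ S k < 0 := by
  have hd : 0 < 2 * C + 1 := by positivity
  have hdisc : (C ^ 2 + 2 * C + 2) ^ 2 < 4 * (C ^ 2 + C + 1) * (2 * C + 1) := by
    nlinarith [mul_pos hC (sub_pos.mpr h)]
  have hshift : ∀ k, (2 * C + 1) * S (k + 1 + 2)
      = (C ^ 2 + 2 * C + 2) * S (k + 1 + 1) - (C ^ 2 + C + 1) * S (k + 1) := fun k => by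
    rw [hrec (k + 2) (by omega), mul_div_cancel₀ _ hd.ne']
    rfl
  obtain ⟨k, hk⟩ := exists_neg_of_linearRecurrence (x := fun k => S (k + 1)) hd hdisc hshift
    (hS1 ▸ one_pos)
  exact ⟨k + 1, by omega, hk⟩

/-- For `0 < C` with `C³ < 4(C²+C+1)`, the recurrence solution `S` attains a
negative value. -/
theorem stmt_14 (C : ℝ) (hC : 0 < C) (h : C ^ 3 < 4 * (C ^ 2 + C + 1))
    (S : ℕ → ℝ) (hS0 : S 0 = 0) (hS1 : S 1 = 1)
    (hrec : ∀ k ≥ 1, S (k + 1)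
      = ((C ^ 2 + 2 * C + 2) * S k - (C ^ 2 + C + 1) * S (k - 1)) / (2 * C + 1)) :
    ∃ k : ℕ, 1 ≤ k ∧ S k < 0 :=
  stmt_14_general C hC h S hS1 hrec
end

section
/- For every real C with 0 < C < R, where R is the unique real root of x³ = 4(x²+x+1), there exists n such that the sequence S defined by S₀ = 0, S₁ = 1, S_{k+1} = ((C²+2C+2)S_k − (C²+C+1)S_{k−1})/(2C+1) satisfies S_n − S_{n−1} < S_{n−1} − S_{n−2}, i.e., the associated weight sequence w_k = S_k − S_{k−1} eventually strictly decreases. -/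
/-!
The increments `u k = S (k + 1) - S k` satisfy the same recurrence as `S`, whose characteristic
polynomial `(2C+1) x² - (C²+2C+2) x + (C²+C+1)` has discriminant `C (C³ - 4C² - 4C - 4) < 0`.
If the increments never decreased they would stay positive. But for a positive solution `u` of
`c u (k+2) + a u (k+1) + b u k = 0` the ratios `r k = u (k+1) / u k` satisfy
`4c² r k (r k - r (k+1)) = (2c r k + a)² - discrim ≥ -discrim > 0`, so they decrease by a fixed
amount at every step and eventually become negative.
-/

theorem neg_of_lt_unique_root {f : ℝ → ℝ} (hf : Continuous f) {a x R : ℝ} (ha : f a < 0)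
    (hax : a ≤ x) (hxR : x < R) (huniq : ∀ y, f y = 0 → y = R) : f x < 0 := by
  by_contra! hx
  obtain ⟨y, hy, hfy⟩ := intermediate_value_Icc hax hf.continuousOn ⟨ha.le, hx⟩
  exact hxR.not_ge (huniq y hfy ▸ hy.2)

theorem exists_nonpos_of_le_mul_sub_succ {r : ℕ → ℝ} {ε : ℝ} (hε : 0 < ε)
    (h : ∀ k, ε ≤ r k * (r k - r (k + 1))) : ∃ k, r k ≤ 0 := by
  by_contra! hpos
  have hdec : ∀ k, r (k + 1) < r k := fun k =>
    sub_pos.mp (pos_of_mul_pos_right (hε.trans_le (h k)) (hpos k).le)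
  have hstep : ∀ k, ε / r 0 ≤ r k - r (k + 1) := fun k => by
    rw [div_le_iff₀ (hpos 0)]
    nlinarith [h k, (strictAnti_nat_of_succ_lt hdec).antitone (Nat.zero_le k), hdec k]
  have hlin : ∀ k : ℕ, r k ≤ r 0 - k * (ε / r 0) := fun k => by
    induction k with
    | zero => simp
    | succ k ih => push_cast; linarith [hstep k]
  obtain ⟨k, hk⟩ := exists_nat_gt (r 0 / (ε / r 0))
  rw [div_lt_iff₀ (div_pos hε (hpos 0))] at hk
  linarith [hlin k, hpos k]

theorem exists_nonpos_of_discrim_neg {a b c : ℝ} (hc : 0 < c) (hd : discrim c a b < 0)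
    {u : ℕ → ℝ} (hu : ∀ k, c * u (k + 2) + a * u (k + 1) + b * u k = 0) :
    ∃ k, u k ≤ 0 := by
  by_contra! hpos
  set r : ℕ → ℝ := fun k => u (k + 1) / u k
  obtain ⟨k, hk⟩ := exists_nonpos_of_le_mul_sub_succ (r := r)
    (ε := -discrim c a b / (4 * c ^ 2)) (div_pos (neg_pos.mpr hd) (by positivity)) fun k => by
      have hprod : c * (r k * r (k + 1)) + a * r k + b = 0 := by
        have := hpos k; have := hpos (k + 1)
        simp only [r]
        field_simp
        linear_combination hu k
      have hsq : r k * (r k - r (k + 1)) * (4 * c ^ 2) = (2 * c * r k + a) ^ 2 - discrim c a b := by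
        rw [discrim]
        linear_combination (-4 * c) * hprod
      rw [div_le_iff₀ (by positivity), hsq]
      linarith [sq_nonneg (2 * c * r k + a)]
  exact (div_pos (hpos _) (hpos _)).not_ge hk

theorem stmt_19_general (R : ℝ)
    (hRuniq : ∀ x : ℝ, x ^ 3 = 4 * (x ^ 2 + x + 1) → x = R)
    (C : ℝ) (hC0 : 0 < C) (hCR : C < R)
    (S : ℕ → ℝ) (hS0 : S 0 = 0) (hS1 : S 1 = 1)
    (hrec : ∀ k ≥ 1, S (k + 1)
      = ((C ^ 2 + 2 * C + 2) * S k - (C ^ 2 + C + 1) * S (k - 1)) / (2 * C + 1)) :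
    ∃ n : ℕ, 2 ≤ n ∧ S n - S (n - 1) < S (n - 1) - S (n - 2) := by
  by_contra! hmono
  have hcubic : C ^ 3 - 4 * (C ^ 2 + C + 1) < 0 :=
    neg_of_lt_unique_root (f := fun x => x ^ 3 - 4 * (x ^ 2 + x + 1)) (by fun_prop)
      (a := 0) (by norm_num) hC0.le hCR fun y hy => hRuniq y (sub_eq_zero.mp hy)
  have hdisc : discrim (2 * C + 1) (-(C ^ 2 + 2 * C + 2)) (C ^ 2 + C + 1) < 0 := by
    have hfactor : discrim (2 * C + 1) (-(C ^ 2 + 2 * C + 2)) (C ^ 2 + C + 1)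
        = C * (C ^ 3 - 4 * (C ^ 2 + C + 1)) := by
      rw [discrim]
      ring
    exact hfactor ▸ mul_neg_of_pos_of_neg hC0 hcubic
  set u : ℕ → ℝ := fun k => S (k + 1) - S k
  have hu : ∀ k, (2 * C + 1) * u (k + 2) + -(C ^ 2 + 2 * C + 2) * u (k + 1)
      + (C ^ 2 + C + 1) * u k = 0 := fun k => by
    have h₁ := hrec (k + 1) (by omega)
    have h₂ := hrec (k + 2) (by omega)
    rw [Nat.add_sub_cancel] at h₁
    rw [show k + 2 - 1 = k + 1 by omega] at h₂
    field_simp at h₁ h₂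
    simp only [u]
    linear_combination h₂ - h₁
  have hu_pos : ∀ k, 0 < u k := fun k => by
    induction k with
    | zero => simp [u, hS0, hS1]
    | succ k ih => simpa [u] using ih.trans_le (hmono (k + 2) (by omega))
  obtain ⟨k, hk⟩ := exists_nonpos_of_discrim_neg (by positivity) hdisc hu
  exact (hu_pos k).not_ge hk

/-- For `0 < C < R` with `R` the unique real root of `x³ = 4(x²+x+1)`, the
increments of the recurrence solution `S` eventually strictly decrease. -/
theorem stmt_19 (R : ℝ) (hR : R ^ 3 = 4 * (R ^ 2 + R + 1))
    (hRuniq : ∀ x : ℝ, x ^ 3 = 4 * (x ^ 2 + x + 1) → x = R)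
    (C : ℝ) (hC0 : 0 < C) (hCR : C < R)
    (S : ℕ → ℝ) (hS0 : S 0 = 0) (hS1 : S 1 = 1)
    (hrec : ∀ k ≥ 1, S (k + 1)
      = ((C ^ 2 + 2 * C + 2) * S k - (C ^ 2 + C + 1) * S (k - 1)) / (2 * C + 1)) :
    ∃ n : ℕ, 2 ≤ n ∧ S n - S (n - 1) < S (n - 1) - S (n - 2) :=
  stmt_19_general R hRuniq C hC0 hCR S hS0 hS1 hrec
end
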